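/- Let ψ : ℝ² → ℝ² be a bijective linear map. Then for every r ∈ {1, …, k} and every z ∈ ψ({λ·v_{r−1} + λ′·v_r : λ, λ′ ≥ 0}), the gauge of ψ(R_k) satisfies G_{ψ(R_k)}(z) = [ (sin θ_r − sin θ_{r−1})·(ψ⁻¹(z))₁ + (cos θ_{r−1} − cos θ_r)·(ψ⁻¹(z))₂ ] / sin θ₁. In particular, the restriction of G_{ψ(R_k)} to each cone ψ({λ·v_{r−1} + λ′·v_r : λ, λ′ ≥ 0}) is linear. -/

import Mathlib

open Pointwise

/-- The gauge (Minkowski functional) of a set `K ⊆ ℝ²`: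
`G_K(z) = inf {λ ≥ 0 : z ∈ λK}`. -/
noncomputable def gaugeFn (K : Set (ℝ × ℝ)) (z : ℝ × ℝ) : ℝ :=
  sInf {l : ℝ | 0 ≤ l ∧ z ∈ l • K}

/-- `θ_r = 2πr/k`. -/
noncomputable def theta (k : ℕ) (r : ℤ) : ℝ := 2 * Real.pi * (r : ℝ) / (k : ℝ)

/-- `v_r = (cos θ_r, sin θ_r)`. -/
noncomputable def vtx (k : ℕ) (r : ℤ) : ℝ × ℝ :=
  (Real.cos (theta k r), Real.sin (theta k r))

/-- The regular `k`-gon `R_k`: the convex hull of `{v_1, …, v_k}`. -/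
noncomputable def Rgon (k : ℕ) : Set (ℝ × ℝ) :=
  convexHull ℝ {z : ℝ × ℝ | ∃ r : ℤ, 1 ≤ r ∧ r ≤ (k : ℤ) ∧ z = vtx k r}

/-!
The edge `[v_{r-1}, v_r]` of `R_k` lies on the line `f_r = sin θ₁`, where `f_r` is the linear
functional of the statement, and `f_r ≤ sin θ₁` at every vertex since
`f_r(v_s) = 2 sin(π/k) cos((2(r-s)-1)π/k)` and an odd multiple of `π/k` has cosine at most
`cos(π/k)`. So `f_r / sin θ₁` supports `R_k` along that edge, and on the cone over the edge the
gauge of `R_k` equals this functional. A linear bijection `ψ` transports gauges.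
-/

theorem gaugeFn_image_of_injective {ψ : (ℝ × ℝ) →ₗ[ℝ] (ℝ × ℝ)} (hψ : Function.Injective ψ)
    (K : Set (ℝ × ℝ)) (z : ℝ × ℝ) : gaugeFn (ψ '' K) (ψ z) = gaugeFn K z := by
  simp only [gaugeFn, ← image_smul_set, hψ.mem_set_image]

theorem gaugeFn_eq_of_mem_smul_of_forall_le {K : Set (ℝ × ℝ)} {f : (ℝ × ℝ) →ₗ[ℝ] ℝ}
    {c t : ℝ} {z : ℝ × ℝ} (hc : 0 < c) (hf : ∀ x ∈ K, f x ≤ c) (ht : 0 ≤ t)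
    (hz : z ∈ t • K) (hfz : f z = t * c) : gaugeFn K z = t := by
  refine IsLeast.csInf_eq ⟨⟨ht, hz⟩, ?_⟩
  rintro l ⟨hl, x, hx, rfl⟩
  have : t * c ≤ l * c := by
    rw [← hfz, map_smul, smul_eq_mul]
    exact mul_le_mul_of_nonneg_left (hf x hx) hl
  exact le_of_mul_le_mul_right this hc

namespace Real

theorem cos_le_cos_of_le_of_le_two_pi_sub {p x : ℝ} (hp : 0 ≤ p) (hpx : p ≤ x)
    (hx : x ≤ 2 * π - p) : cos x ≤ cos p := by
  rcases le_total x π with hxπ | hπx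
  · exact cos_le_cos_of_nonneg_of_le_pi hp hxπ hpx
  · rw [← cos_two_pi_sub]
    exact cos_le_cos_of_nonneg_of_le_pi hp (by linarith) (by linarith)

theorem cos_odd_mul_pi_div_le {n : ℕ} (hn : 0 < n) {m : ℤ} (hm : Odd m) :
    cos (m * (π / n)) ≤ cos (π / n) := by
  have hn2 : (0 : ℤ) < 2 * n := by positivity
  set j := m % (2 * n)
  have hj0 : 0 ≤ j := Int.emod_nonneg m hn2.ne'
  have hj_odd : j % 2 = 1 := by
    rw [Int.emod_emod_of_dvd m (dvd_mul_right 2 (n : ℤ))]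
    exact Int.odd_iff.mp hm
  have hj1 : (1 : ℝ) ≤ j := by exact_mod_cast (show 1 ≤ j by omega)
  have hj2 : (j : ℝ) ≤ 2 * n - 1 := by
    exact_mod_cast (show j ≤ 2 * n - 1 by have := Int.emod_lt_of_pos m hn2; omega)
  have hnR : (0 : ℝ) < n := by exact_mod_cast hn
  obtain ⟨q, hmq⟩ : ∃ q : ℤ, m = j + 2 * n * q :=
    ⟨m / (2 * n), by linarith [Int.mul_ediv_add_emod m (2 * n)]⟩
  have hperiod : (m : ℝ) * (π / n) = j * (π / n) + q * (2 * π) := by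
    rw [hmq]
    push_cast
    field_simp
  have hp : 0 < π / n := div_pos pi_pos hnR
  rw [hperiod, cos_add_int_mul_two_pi]
  refine cos_le_cos_of_le_of_le_two_pi_sub hp.le (by nlinarith) ?_
  have : (n : ℝ) * (π / n) = π := by field_simp
  nlinarith

end Real

section Polygon

open Real

variable {k : ℕ}

theorem vtx_add_self (hk : k ≠ 0) (r : ℤ) : vtx k (r + k) = vtx k r := by
  have : theta k (r + k) = theta k r + 2 * π := by
    unfold theta
    push_cast
    field_simp
  simp only [vtx, this, cos_add_two_pi, sin_add_two_pi]

theorem convex_Rgon : Convex ℝ (Rgon k) :=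
  convex_convexHull ℝ _

theorem vtx_mem_Rgon (hk : k ≠ 0) {r : ℤ} (h0 : 0 ≤ r) (hr : r ≤ k) : vtx k r ∈ Rgon k := by
  apply subset_convexHull
  rcases h0.eq_or_lt with rfl | h0
  · exact ⟨k, by omega, le_rfl, by rw [← vtx_add_self hk, zero_add]⟩
  · exact ⟨r, h0, hr, rfl⟩

theorem sin_theta_one : sin (theta k 1) = 2 * sin (π / k) * cos (π / k) := by
  rw [← sin_two_mul]
  unfold theta
  ring_nf

noncomputable def edgeFunctional (k : ℕ) (r : ℤ) : (ℝ × ℝ) →ₗ[ℝ] ℝ :=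
  (sin (theta k r) - sin (theta k (r - 1))) • LinearMap.fst ℝ ℝ ℝ
    + (cos (theta k (r - 1)) - cos (theta k r)) • LinearMap.snd ℝ ℝ ℝ

theorem edgeFunctional_apply (r : ℤ) (z : ℝ × ℝ) :
    edgeFunctional k r z = (sin (theta k r) - sin (theta k (r - 1))) * z.1
      + (cos (theta k (r - 1)) - cos (theta k r)) * z.2 :=
  rfl

theorem edgeFunctional_vtx (r s : ℤ) :
    edgeFunctional k r (vtx k s) = 2 * sin (π / k) * cos ((2 * (r - s) - 1 : ℤ) * (π / k)) := by
  have hdiff : edgeFunctional k r (vtx k s)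
      = sin (theta k r - theta k s) - sin (theta k (r - 1) - theta k s) := by
    rw [edgeFunctional_apply, sin_sub, sin_sub]
    simp only [vtx]
    ring
  rw [hdiff, sin_sub_sin]
  unfold theta
  push_cast
  ring_nf

theorem edgeFunctional_vtx_le (hk : 0 < k) (r s : ℤ) :
    edgeFunctional k r (vtx k s) ≤ sin (theta k 1) := by
  have hsin : 0 ≤ sin (π / k) := by
    have : (1 : ℝ) ≤ k := by exact_mod_cast hk
    apply sin_nonneg_of_nonneg_of_le_pi (by positivity)
    exact div_le_self pi_pos.le this
  rw [edgeFunctional_vtx, sin_theta_one]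
  have := cos_odd_mul_pi_div_le hk (m := 2 * (r - s) - 1) ⟨r - s - 1, by ring⟩
  exact mul_le_mul_of_nonneg_left this (by positivity)

theorem edgeFunctional_le_on_Rgon (hk : 0 < k) (r : ℤ) :
    ∀ x ∈ Rgon k, edgeFunctional k r x ≤ sin (theta k 1) := by
  refine fun x ↦ convexHull_min (t := edgeFunctional k r ⁻¹' Set.Iic _) ?_
    ((convex_Iic _).linear_preimage _) (a := x)
  rintro _ ⟨s, -, -, rfl⟩
  exact edgeFunctional_vtx_le hk r s

theorem edgeFunctional_vtx_self (r : ℤ) : edgeFunctional k r (vtx k r) = sin (theta k 1) := by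
  rw [edgeFunctional_vtx, sin_theta_one]
  simp

theorem edgeFunctional_vtx_sub_one (r : ℤ) :
    edgeFunctional k r (vtx k (r - 1)) = sin (theta k 1) := by
  rw [edgeFunctional_vtx, sin_theta_one]
  simp

theorem sin_theta_one_pos (hk : 3 ≤ k) : 0 < sin (theta k 1) := by
  have hk3 : (3 : ℝ) ≤ k := by exact_mod_cast hk
  rw [sin_theta_one]
  have h0 : 0 < π / k := by positivity
  have h1 : π / k < π / 2 := by
    rw [div_lt_div_iff_of_pos_left pi_pos (by positivity) two_pos]
    linarith
  have := sin_pos_of_pos_of_lt_pi h0 (by linarith [pi_pos])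
  have := cos_pos_of_mem_Ioo ⟨by linarith, h1⟩
  positivity

end Polygon

theorem gauge_polygonal_norm_linear_on_cones_general
    (k : ℕ) (hk : 4 ≤ k)
    (ψ : (ℝ × ℝ) →ₗ[ℝ] (ℝ × ℝ)) (hψ : Function.Bijective ψ)
    (r : ℤ) (hr1 : 1 ≤ r) (hrk : r ≤ (k : ℤ))
    (lam lam' : ℝ) (hlam : 0 ≤ lam) (hlam' : 0 ≤ lam') :
    gaugeFn (ψ '' Rgon k) (ψ (lam • vtx k (r - 1) + lam' • vtx k r))
      = ((Real.sin (theta k r) - Real.sin (theta k (r - 1)))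
            * (lam • vtx k (r - 1) + lam' • vtx k r).1
        + (Real.cos (theta k (r - 1)) - Real.cos (theta k r))
            * (lam • vtx k (r - 1) + lam' • vtx k r).2)
        / Real.sin (theta k 1) := by
  set w := lam • vtx k (r - 1) + lam' • vtx k r
  have hS := sin_theta_one_pos (by omega : 3 ≤ k)
  have hw : w ∈ (lam + lam') • Rgon k := by
    rw [convex_Rgon.add_smul hlam hlam']
    exact Set.add_mem_add (Set.smul_mem_smul_set (vtx_mem_Rgon (by omega) (by omega) (by omega)))
      (Set.smul_mem_smul_set (vtx_mem_Rgon (by omega) (by omega) hrk))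
  have hfw : edgeFunctional k r w = (lam + lam') * Real.sin (theta k 1) := by
    simp only [w, map_add, map_smul, edgeFunctional_vtx_self, edgeFunctional_vtx_sub_one,
      smul_eq_mul, add_mul]
  rw [gaugeFn_image_of_injective hψ.injective, ← edgeFunctional_apply, hfw,
    mul_div_cancel_right₀ _ hS.ne']
  exact gaugeFn_eq_of_mem_smul_of_forall_le hS (edgeFunctional_le_on_Rgon (by omega) r)
    (add_nonneg hlam hlam') hw hfw

/-- For a bijective linear map `ψ : ℝ² → ℝ²`, on each cone
`ψ({λ·v_{r−1} + λ′·v_r : λ, λ′ ≥ 0})` (with `1 ≤ r ≤ k`) the gauge of `ψ(R_k)`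
satisfies
`G_{ψ(R_k)}(z) = [(sin θ_r − sin θ_{r−1})·(ψ⁻¹z)₁ + (cos θ_{r−1} − cos θ_r)·(ψ⁻¹z)₂] / sin θ₁`;
in particular the restriction of the gauge to each such cone is linear. -/
theorem gauge_polygonal_norm_linear_on_cones
    (k : ℕ) (hk : 4 ≤ k) (hke : Even k)
    (ψ : (ℝ × ℝ) →ₗ[ℝ] (ℝ × ℝ)) (hψ : Function.Bijective ψ)
    (r : ℤ) (hr1 : 1 ≤ r) (hrk : r ≤ (k : ℤ))
    (lam lam' : ℝ) (hlam : 0 ≤ lam) (hlam' : 0 ≤ lam') :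
    gaugeFn (ψ '' Rgon k) (ψ (lam • vtx k (r - 1) + lam' • vtx k r))
      = ((Real.sin (theta k r) - Real.sin (theta k (r - 1)))
            * (lam • vtx k (r - 1) + lam' • vtx k r).1
        + (Real.cos (theta k (r - 1)) - Real.cos (theta k r))
            * (lam • vtx k (r - 1) + lam' • vtx k r).2)
        / Real.sin (theta k 1) :=
  gauge_polygonal_norm_linear_on_cones_general k hk ψ hψ r hr1 hrk lam lam' hlam hlam'
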